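/- arXiv:2210.06163 — 3 statements merged into one kernel-verified Lean document; each statement's English description precedes it below -/
import Mathlib

section
/- Let S ≥ 1 and d ≥ 1. For each s ∈ Fin S let R s be a d×d real upper triangular matrix (R s k l = 0 whenever l < k) with strictly positive diagonal entries (0 < R s k k for all k). Define the stacked columns a : Fin d → EuclideanSpace ℝ (Fin S × Fin d) by a i (s, k) = R s k i, and let u = gramSchmidt ℝ a be the (unnormalized) Gram–Schmidt orthogonal family of the columns. Define the per-site squared norms N s i = ∑_{k} (u i (s,k))², the global norms n j = ∑_{s} N s j, and the per-site residuals P s i j = (∑_{k} u j (s,k) · a i (s,k)) / n j for j < i. If two families R and R' of upper triangular matrices with strictly positive diagonals produce identical statistics, i.e. N s i = N' s i for all s, i and P s i j = P' s i j for all s and all j < i, then R s = R' s for every s. -/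
/-- `gramSchmidt ℝ a` (Mathlib's unnormalized Gram–Schmidt orthogonalization), with the
`WellFoundedLT (Fin d)` instance supplied explicitly. -/
noncomputable def gramSchmidtStack {S d : ℕ}
    (a : Fin d → EuclideanSpace ℝ (Fin S × Fin d)) :
    Fin d → EuclideanSpace ℝ (Fin S × Fin d) :=
  @InnerProductSpace.gramSchmidt ℝ (EuclideanSpace ℝ (Fin S × Fin d)) _ _ _ (Fin d) _ _
    (inferInstance : WellFoundedLT (Fin d)) a

private lemma gs_coord {S d : ℕ} (a : Fin d → EuclideanSpace ℝ (Fin S × Fin d))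
    (i : Fin d) (p : Fin S × Fin d) :
    gramSchmidtStack a i p = a i p - ∑ j ∈ Finset.Iio i,
      ((∑ q : Fin S × Fin d, gramSchmidtStack a j q * a i q) /
       (∑ q : Fin S × Fin d, (gramSchmidtStack a j q) ^ 2)) * gramSchmidtStack a j p := by
  have h := @InnerProductSpace.gramSchmidt_def'' ℝ (EuclideanSpace ℝ (Fin S × Fin d)) _ _ _ (Fin d) _ _
    (inferInstance : WellFoundedLT (Fin d)) a i
  rw [show (@InnerProductSpace.gramSchmidt ℝ (EuclideanSpace ℝ (Fin S × Fin d)) _ _ _ (Fin d) _ _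
    (inferInstance : WellFoundedLT (Fin d)) a) = gramSchmidtStack a from rfl] at h
  have h2 : ∀ j : Fin d, (‖gramSchmidtStack a j‖ : ℝ) ^ 2
      = ∑ q : Fin S × Fin d, (gramSchmidtStack a j q) ^ 2 := by
    intro j
    rw [← real_inner_self_eq_norm_sq]
    simp only [PiLp.inner_apply, RCLike.inner_apply, conj_trivial, sq]
  have h3 : ∀ j : Fin d, (inner ℝ (gramSchmidtStack a j) (a i) : ℝ)
      = ∑ q : Fin S × Fin d, gramSchmidtStack a j q * a i q := by
    intro j
    simp [PiLp.inner_apply, RCLike.inner_apply, conj_trivial, mul_comm]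
  simp only [RCLike.ofReal_real_eq_id, id_eq, h2, h3] at h
  have hsum : ∀ (t : Finset (Fin d)) (f : Fin d → EuclideanSpace ℝ (Fin S × Fin d)),
      (∑ j ∈ t, f j) p = ∑ j ∈ t, f j p := by
    intro t f
    classical
    induction t using Finset.induction with
    | empty => simp
    | insert j t hnot ih => rw [Finset.sum_insert hnot, Finset.sum_insert hnot, PiLp.add_apply, ih]
  have hp := congrArg (fun v => v p) h
  simp only [PiLp.add_apply] at hp
  rw [hsum] at hp
  simp only [PiLp.smul_apply, smul_eq_mul] at hp
  rw [hp]
  ring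

/-- triangular structure of the Gram–Schmidt vectors of stacked upper-triangular columns -/
private lemma gs_triang {S d : ℕ} (R : Fin S → Matrix (Fin d) (Fin d) ℝ)
    (hRu : ∀ s, ∀ k l : Fin d, l < k → R s k l = 0)
    (a : Fin d → EuclideanSpace ℝ (Fin S × Fin d))
    (ha : ∀ (i : Fin d) (s : Fin S) (k : Fin d), a i (s, k) = R s k i) :
    ∀ i : Fin d, (∀ (s : Fin S) (k : Fin d), i < k → gramSchmidtStack a i (s, k) = 0)
      ∧ (∀ s : Fin S, gramSchmidtStack a i (s, i) = R s i i) := by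
  have main : ∀ i : Fin d,
      (∀ (s : Fin S) (k : Fin d), i < k → gramSchmidtStack a i (s, k) = 0)
        ∧ (∀ s : Fin S, gramSchmidtStack a i (s, i) = R s i i) := by
    intro i
    refine (wellFounded_lt (α := Fin d)).induction
      (C := fun i => (∀ (s : Fin S) (k : Fin d), i < k → gramSchmidtStack a i (s, k) = 0)
        ∧ (∀ s : Fin S, gramSchmidtStack a i (s, i) = R s i i)) i ?_
    intro i IH
    constructor
    · intro s k hik
      rw [gs_coord a i (s, k), ha]
      rw [hRu s k i hik]
      have : ∀ j ∈ Finset.Iio i, ((∑ q : Fin S × Fin d, gramSchmidtStack a j q * a i q) /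
          (∑ q : Fin S × Fin d, (gramSchmidtStack a j q) ^ 2)) * gramSchmidtStack a j (s, k) = 0 := by
        intro j hj
        rw [(IH j (Finset.mem_Iio.mp hj)).1 s k (lt_trans (Finset.mem_Iio.mp hj) hik), mul_zero]
      rw [Finset.sum_eq_zero this, sub_zero]
    · intro s
      rw [gs_coord a i (s, i), ha]
      have : ∀ j ∈ Finset.Iio i, ((∑ q : Fin S × Fin d, gramSchmidtStack a j q * a i q) /
          (∑ q : Fin S × Fin d, (gramSchmidtStack a j q) ^ 2)) * gramSchmidtStack a j (s, i) = 0 := by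
        intro j hj
        rw [(IH j (Finset.mem_Iio.mp hj)).1 s i (Finset.mem_Iio.mp hj), mul_zero]
      rw [Finset.sum_eq_zero this, sub_zero]
  exact main

/-- Reconstruction of stacked upper triangular inputs from federated Gram–Schmidt
statistics: if two families `R`, `R'` of `d × d` upper triangular matrices with strictly
positive diagonals produce identical per-site squared norms
`N s i = ∑ k, (u i (s,k))²` and identical per-site residuals
`P s i j = (∑ k, u j (s,k) · a i (s,k)) / n j` (for `j < i`, where
`n j = ∑ s, N s j` and `u` is the Gram–Schmidt orthogonal family of the stacked
columns `a i (s,k) = R s k i`), then `R s = R' s` for every site `s`. -/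
theorem federated_gram_schmidt_reconstruction
    (S d : ℕ) (hS : 1 ≤ S) (hd : 1 ≤ d)
    (R R' : Fin S → Matrix (Fin d) (Fin d) ℝ)
    (hRu : ∀ s, ∀ k l : Fin d, l < k → R s k l = 0)
    (hR'u : ∀ s, ∀ k l : Fin d, l < k → R' s k l = 0)
    (hRd : ∀ s, ∀ k : Fin d, 0 < R s k k)
    (hR'd : ∀ s, ∀ k : Fin d, 0 < R' s k k)
    (a a' : Fin d → EuclideanSpace ℝ (Fin S × Fin d))
    (ha : ∀ (i : Fin d) (s : Fin S) (k : Fin d), a i (s, k) = R s k i)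
    (ha' : ∀ (i : Fin d) (s : Fin S) (k : Fin d), a' i (s, k) = R' s k i)
    (u u' : Fin d → EuclideanSpace ℝ (Fin S × Fin d))
    (hu : u = gramSchmidtStack a)
    (hu' : u' = gramSchmidtStack a')
    (hN : ∀ (s : Fin S) (i : Fin d),
      ∑ k : Fin d, (u i (s, k)) ^ 2 = ∑ k : Fin d, (u' i (s, k)) ^ 2)
    (hP : ∀ (s : Fin S) (i j : Fin d), j < i →
      (∑ k : Fin d, u j (s, k) * a i (s, k)) /
          (∑ t : Fin S, ∑ k : Fin d, (u j (t, k)) ^ 2)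
        = (∑ k : Fin d, u' j (s, k) * a' i (s, k)) /
          (∑ t : Fin S, ∑ k : Fin d, (u' j (t, k)) ^ 2)) :
    ∀ s : Fin S, R s = R' s := by
  classical
  subst hu hu'
  set u : Fin d → EuclideanSpace ℝ (Fin S × Fin d) := gramSchmidtStack a with hu
  set u' : Fin d → EuclideanSpace ℝ (Fin S × Fin d) := gramSchmidtStack a' with hu'
  obtain ⟨T⟩ : Nonempty (∀ i : Fin d,
      (∀ (s : Fin S) (k : Fin d), i < k → u i (s, k) = 0) ∧ (∀ s, u i (s, i) = R s i i)) :=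
    ⟨gs_triang R hRu a ha⟩
  obtain ⟨T'⟩ : Nonempty (∀ i : Fin d,
      (∀ (s : Fin S) (k : Fin d), i < k → u' i (s, k) = 0) ∧ (∀ s, u' i (s, i) = R' s i i)) :=
    ⟨gs_triang R' hR'u a' ha'⟩
  have s0 : Fin S := ⟨0, hS⟩
  -- positivity of denominators
  have hn : ∀ j : Fin d, 0 < ∑ t : Fin S, ∑ k : Fin d, (u j (t, k)) ^ 2 := by
    intro j
    refine Finset.sum_pos' (fun t _ => Finset.sum_nonneg fun k _ => sq_nonneg _)
      ⟨s0, Finset.mem_univ _, ?_⟩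
    refine Finset.sum_pos' (fun k _ => sq_nonneg _) ⟨j, Finset.mem_univ _, ?_⟩
    rw [(T j).2 s0]
    exact pow_pos (hRd s0 j) 2
  have key : ∀ i : Fin d, (∀ (s : Fin S) (k : Fin d), R s k i = R' s k i)
      ∧ (∀ p : Fin S × Fin d, u i p = u' i p) := by
    intro i
    refine (wellFounded_lt (α := Fin d)).induction
      (C := fun i => (∀ (s : Fin S) (k : Fin d), R s k i = R' s k i)
        ∧ (∀ p : Fin S × Fin d, u i p = u' i p)) i ?_
    intro i IH
    -- per-site numerator equality for j < i
    have hnum : ∀ (s : Fin S) (j : Fin d), j < i →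
        ∑ k : Fin d, u j (s, k) * a i (s, k) = ∑ k : Fin d, u j (s, k) * a' i (s, k) := by
      intro s j hj
      have hPe := hP s i j hj
      have hueq : ∀ p, u' j p = u j p := fun p => ((IH j hj).2 p).symm
      simp only [hueq] at hPe
      exact (div_left_inj' (ne_of_gt (hn j))).mp hPe
    -- sub-diagonal entries agree
    have hlow : ∀ (s : Fin S) (k : Fin d), k < i → R s k i = R' s k i := by
      intro s k
      refine (wellFounded_lt (α := Fin d)).induction
        (C := fun k => k < i → R s k i = R' s k i) k ?_
      intro k IHk hk
      have h0 : ∑ m : Fin d, u k (s, m) * (a i (s, m) - a' i (s, m)) = 0 := by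
        have hh := hnum s k hk
        simp only [mul_sub, Finset.sum_sub_distrib]
        rw [hh, sub_self]
      rw [Finset.sum_eq_single k] at h0
      · have hd0 : u k (s, k) = R s k k := (T k).2 s
        have hz : a i (s, k) - a' i (s, k) = 0 := by
          rcases mul_eq_zero.mp h0 with h | h
          · exact absurd (hd0 ▸ h) (ne_of_gt (hRd s k))
          · exact h
        rw [ha, ha'] at hz
        linarith
      · intro m _ hmk
        rcases hmk.lt_or_gt with hlt | hgt
        · have hz : a i (s, m) - a' i (s, m) = 0 := by
            rw [ha, ha', IHk m hlt (lt_trans hlt hk), sub_self]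
          rw [hz, mul_zero]
        · rw [(T k).1 s m hgt, zero_mul]
      · intro h; exact absurd (Finset.mem_univ k) h
    -- the Gram-Schmidt vectors differ exactly by the input difference
    have hdiff : ∀ p : Fin S × Fin d, u i p - u' i p = a i p - a' i p := by
      intro p
      rw [hu, hu', gs_coord a i p, gs_coord a' i p, ← hu, ← hu']
      have hterm : (∑ j ∈ Finset.Iio i,
          ((∑ q : Fin S × Fin d, u j q * a i q) / (∑ q : Fin S × Fin d, (u j q) ^ 2)) * u j p)
          = ∑ j ∈ Finset.Iio i,
          ((∑ q : Fin S × Fin d, u' j q * a' i q) /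
            (∑ q : Fin S × Fin d, (u' j q) ^ 2)) * u' j p := by
        refine Finset.sum_congr rfl fun j hj => ?_
        have hj' : j < i := Finset.mem_Iio.mp hj
        have hueq : ∀ q, u j q = u' j q := (IH j hj').2
        have h1 : (∑ q : Fin S × Fin d, u j q * a i q)
            = ∑ q : Fin S × Fin d, u' j q * a' i q := by
          rw [Fintype.sum_prod_type, Fintype.sum_prod_type]
          refine Finset.sum_congr rfl fun s _ => ?_
          rw [hnum s j hj']
          exact Finset.sum_congr rfl fun k _ => by rw [hueq (s, k)]
        have h2 : (∑ q : Fin S × Fin d, (u j q) ^ 2)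
            = ∑ q : Fin S × Fin d, (u' j q) ^ 2 :=
          Finset.sum_congr rfl fun q _ => by rw [hueq q]
        rw [h1, h2, hueq p]
      rw [hterm]
      ring
    -- diagonal entries agree
    have hdiag : ∀ s : Fin S, R s i i = R' s i i := by
      intro s
      have hNe := hN s i
      have hne : ∀ k : Fin d, k ≠ i → u i (s, k) = u' i (s, k) := by
        intro k hk
        have hdp := hdiff (s, k)
        have hz : a i (s, k) - a' i (s, k) = 0 := by
          rcases hk.lt_or_gt with h | h
          · rw [ha, ha', hlow s k h, sub_self]
          · rw [ha, ha', hRu s k i h, hR'u s k i h, sub_self]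
        rw [hz] at hdp
        linarith
      have hsp : (u i (s, i)) ^ 2 = (u' i (s, i)) ^ 2 := by
        rw [← Finset.add_sum_erase _ _ (Finset.mem_univ i),
          ← Finset.add_sum_erase _ _ (Finset.mem_univ i)] at hNe
        have he : ∑ k ∈ Finset.univ.erase i, (u i (s, k)) ^ 2
            = ∑ k ∈ Finset.univ.erase i, (u' i (s, k)) ^ 2 :=
          Finset.sum_congr rfl fun k hk => by rw [hne k (Finset.ne_of_mem_erase hk)]
        linarith
      rw [(T i).2 s, (T' i).2 s] at hsp
      have hfac : (R s i i - R' s i i) * (R s i i + R' s i i) = 0 := by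
        linear_combination hsp
      rcases mul_eq_zero.mp hfac with h | h
      · linarith
      · exfalso; have := hRd s i; have := hR'd s i; linarith
    -- column equality
    have hcol : ∀ (s : Fin S) (k : Fin d), R s k i = R' s k i := by
      intro s k
      rcases lt_trichotomy k i with h | h | h
      · exact hlow s k h
      · subst h; exact hdiag s
      · rw [hRu s k i h, hR'u s k i h]
    refine ⟨hcol, fun p => ?_⟩
    obtain ⟨s, k⟩ := p
    have hdp := hdiff (s, k)
    rw [ha, ha', hcol s k, sub_self] at hdp
    linarith
  intro s
  ext k l
  exact (key l).1 s k
end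

section
/- Let n ≥ 1 and let a, b : EuclideanSpace ℝ (Fin n) satisfy a 0 ≠ 0, b 0 ≠ 0, and Real.sign (a 0) = Real.sign (b 0). Let Ma = max_{k} |a k| and Mb = max_{k} |b k| (Finset suprema over all coordinates), and set ā = Ma⁻¹ • a, b̄ = Mb⁻¹ • b, u = ā + Real.sign (ā 0) • ‖ā‖ • e₀ and v = b̄ + Real.sign (b̄ 0) • ‖b̄‖ • e₀, where e₀ = EuclideanSpace.single 0 1 and ‖·‖ is the Euclidean norm. If Ma = Mb and the outer products agree, Matrix.vecMulVec u u = Matrix.vecMulVec v v, then a = b. (Hence the maximal element, the sign of the first entry, and the Householder reflector matrix u uᵀ together determine the input column exactly.) -/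
/-- The maximal absolute entry of a vector, `max_k |a k|`. -/
noncomputable def maxAbs {n : ℕ} [NeZero n] (a : EuclideanSpace ℝ (Fin n)) : ℝ :=
  Finset.univ.sup' Finset.univ_nonempty fun k => |a k|

/-- The Householder vector of a column `a`: `a + sign(a₀) ‖a‖₂ e₀`. -/
noncomputable def householderVec {n : ℕ} [NeZero n] (a : EuclideanSpace ℝ (Fin n)) :
    EuclideanSpace ℝ (Fin n) :=
  a + Real.sign (a 0) • ‖a‖ • (EuclideanSpace.single 0 1 : EuclideanSpace ℝ (Fin n))

lemma sign_mul_pos_left (c x : ℝ) (hc : 0 < c) : Real.sign (c * x) = Real.sign x := by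
  rcases lt_trichotomy x 0 with h | h | h
  · rw [Real.sign_of_neg h, Real.sign_of_neg (mul_neg_of_pos_of_neg hc h)]
  · simp [h]
  · rw [Real.sign_of_pos h, Real.sign_of_pos (mul_pos hc h)]

lemma hvec_apply0 {n : ℕ} [NeZero n] (x : EuclideanSpace ℝ (Fin n)) :
    householderVec x 0 = x 0 + Real.sign (x 0) * ‖x‖ := by
  simp [householderVec, EuclideanSpace.single_apply, PiLp.add_apply, PiLp.smul_apply,
    smul_eq_mul]

lemma hvec_apply_ne {n : ℕ} [NeZero n] (x : EuclideanSpace ℝ (Fin n)) (k : Fin n)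
    (hk : k ≠ 0) : householderVec x k = x k := by
  simp [householderVec, EuclideanSpace.single_apply, PiLp.add_apply, PiLp.smul_apply,
    smul_eq_mul, hk]

lemma norm_sq_split {n : ℕ} [NeZero n] (x : EuclideanSpace ℝ (Fin n)) :
    ‖x‖ ^ 2 = x 0 ^ 2 + ∑ k ∈ Finset.univ.erase 0, x k ^ 2 := by
  rw [EuclideanSpace.norm_eq, Real.sq_sqrt (by positivity)]
  rw [← Finset.add_sum_erase _ _ (Finset.mem_univ (0 : Fin n))]
  simp [sq_abs]

/-- Householder reconstruction attack: the maximal absolute entry, the sign of the first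
entry, and the Householder reflector outer-product matrix `u uᵀ` (formed from the column
normalized by its maximal absolute entry) together determine the input column exactly. -/
theorem householder_reconstruction (n : ℕ) [NeZero n]
    (a b : EuclideanSpace ℝ (Fin n)) (ha : a 0 ≠ 0) (hb : b 0 ≠ 0)
    (hsgn : Real.sign (a 0) = Real.sign (b 0))
    (hM : maxAbs a = maxAbs b)
    (houter :
      Matrix.vecMulVec (householderVec ((maxAbs a)⁻¹ • a)) (householderVec ((maxAbs a)⁻¹ • a))
        = Matrix.vecMulVec (householderVec ((maxAbs b)⁻¹ • b))
            (householderVec ((maxAbs b)⁻¹ • b))) :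
    a = b := by
  have hMa : 0 < maxAbs a :=
    lt_of_lt_of_le (abs_pos.mpr ha) (Finset.le_sup' (fun k => |a k|) (Finset.mem_univ (0 : Fin n)))
  have hMb : 0 < maxAbs b := hM ▸ hMa
  set A : EuclideanSpace ℝ (Fin n) := (maxAbs a)⁻¹ • a with hAdef
  set B : EuclideanSpace ℝ (Fin n) := (maxAbs b)⁻¹ • b with hBdef
  have hAk : ∀ k, A k = (maxAbs a)⁻¹ * a k := fun k => rfl
  have hBk : ∀ k, B k = (maxAbs b)⁻¹ * b k := fun k => rfl
  set s : ℝ := Real.sign (a 0) with hsdef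
  have hsA : Real.sign (A 0) = s := by
    rw [hAk, sign_mul_pos_left _ _ (inv_pos.mpr hMa)]
  have hsB : Real.sign (B 0) = s := by
    rw [hBk, sign_mul_pos_left _ _ (inv_pos.mpr hMb)]; exact hsgn.symm
  have hA0 : A 0 ≠ 0 := by
    rw [hAk]; exact mul_ne_zero (inv_ne_zero hMa.ne') ha
  have hB0 : B 0 ≠ 0 := by
    rw [hBk]; exact mul_ne_zero (inv_ne_zero hMb.ne') hb
  have hAne : A ≠ 0 := fun h => hA0 (by rw [h]; rfl)
  have hBne : B ≠ 0 := fun h => hB0 (by rw [h]; rfl)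
  have hNA : 0 < ‖A‖ := norm_pos_iff.mpr hAne
  have hNB : 0 < ‖B‖ := norm_pos_iff.mpr hBne
  -- sign times entry is positive
  have hsx : 0 < s * A 0 := by
    rcases hA0.lt_or_gt with h | h
    · rw [← hsA, Real.sign_of_neg h]; simpa using h
    · rw [← hsA, Real.sign_of_pos h]; linarith
  have hsy : 0 < s * B 0 := by
    rcases hB0.lt_or_gt with h | h
    · rw [← hsB, Real.sign_of_neg h]; simpa using h
    · rw [← hsB, Real.sign_of_pos h]; linarith
  have hss : s * s = 1 := by
    rcases lt_trichotomy (a 0) 0 with h | h | h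
    · rw [hsdef, Real.sign_of_neg h]; norm_num
    · exact absurd h ha
    · rw [hsdef, Real.sign_of_pos h]; norm_num
  -- entrywise equality of outer products
  have hent : ∀ k l, householderVec A k * householderVec A l
      = householderVec B k * householderVec B l := by
    intro k l
    have := congrFun (congrFun houter k) l
    simpa [Matrix.vecMulVec_apply] using this
  set u0 : ℝ := householderVec A 0 with hu0def
  set v0 : ℝ := householderVec B 0 with hv0def
  have hu0 : u0 = A 0 + s * ‖A‖ := by rw [hu0def, hvec_apply0, hsA]
  have hv0 : v0 = B 0 + s * ‖B‖ := by rw [hv0def, hvec_apply0, hsB]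
  have hsu0 : 0 < s * u0 := by
    have : s * u0 = s * A 0 + s * s * ‖A‖ := by rw [hu0]; ring
    rw [this, hss]; linarith
  have hsv0 : 0 < s * v0 := by
    have : s * v0 = s * B 0 + s * s * ‖B‖ := by rw [hv0]; ring
    rw [this, hss]; linarith
  have hu0ne : u0 ≠ 0 := fun h => by simp [h] at hsu0
  -- u0 = v0
  have hsq : u0 ^ 2 = v0 ^ 2 := by
    have := hent 0 0; rw [← hu0def, ← hv0def] at this
    nlinarith [this]
  have huv0 : u0 = v0 := by
    rcases sq_eq_sq_iff_eq_or_eq_neg.mp hsq with h | h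
    · exact h
    · exfalso
      have : s * u0 = -(s * v0) := by rw [h]; ring
      linarith
  -- all entries of householder vectors equal
  have huv : ∀ k, householderVec A k = householderVec B k := by
    intro k
    have h1 := hent k 0
    rw [← hu0def, ← hv0def, ← huv0] at h1
    exact mul_right_cancel₀ hu0ne h1
  -- tails equal
  have htail : ∀ k : Fin n, k ≠ 0 → A k = B k := by
    intro k hk
    have := huv k
    rwa [hvec_apply_ne _ _ hk, hvec_apply_ne _ _ hk] at this
  -- norm relation
  have hnorm : ‖A‖ ^ 2 - A 0 ^ 2 = ‖B‖ ^ 2 - B 0 ^ 2 := by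
    rw [norm_sq_split A, norm_sq_split B]
    have : ∑ k ∈ Finset.univ.erase 0, A k ^ 2 = ∑ k ∈ Finset.univ.erase 0, B k ^ 2 :=
      Finset.sum_congr rfl fun k hk => by
        rw [htail k (Finset.mem_erase.mp hk).1]
    rw [this]; ring
  -- first entries equal
  have h1 : A 0 + s * ‖A‖ = B 0 + s * ‖B‖ := by rw [← hu0, ← hv0, huv0]
  have heq1 : A 0 - B 0 = s * ‖B‖ - s * ‖A‖ := by linarith
  have key : (A 0 - B 0) * (A 0 + B 0 + s * (‖A‖ + ‖B‖)) = 0 := by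
    linear_combination (s * ‖A‖ + s * ‖B‖) * heq1 + (‖B‖ ^ 2 - ‖A‖ ^ 2) * hss - hnorm
  have hpos : 0 < s * (A 0 + B 0 + s * (‖A‖ + ‖B‖)) := by
    have : s * (A 0 + B 0 + s * (‖A‖ + ‖B‖))
        = s * A 0 + s * B 0 + (s * s) * (‖A‖ + ‖B‖) := by ring
    rw [this, hss]; linarith
  have hAB0 : A 0 = B 0 := by
    rcases mul_eq_zero.mp key with h | h
    · linarith
    · rw [h, mul_zero] at hpos; exact absurd hpos (lt_irrefl 0)
  -- conclude
  have hABeq : A = B := by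
    ext k
    by_cases hk : k = 0
    · rw [hk]; exact hAB0
    · exact htail k hk
  have : a = maxAbs a • A := (smul_inv_smul₀ hMa.ne' a).symm
  rw [this, hABeq, hBdef, hM, smul_inv_smul₀ hMb.ne']
end

section
/- Let n ≥ 1 and a, b : EuclideanSpace ℝ (Fin n) with a 0 ≠ 0 and b 0 ≠ 0. If a + Real.sign (a 0) • ‖a‖ • e₀ = b + Real.sign (b 0) • ‖b‖ • e₀, where e₀ = EuclideanSpace.single 0 1 and ‖·‖ is the Euclidean norm, then a = b. That is, the map a ↦ a + sign(a₀)‖a‖₂ e₀ forming the Householder vector is injective on vectors with nonzero first coordinate, so the original column can be recovered from the Householder vector. -/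
/-- The map `a ↦ a + sign(a₀) ‖a‖ e₀` forming the Householder vector is injective on
vectors with nonzero first coordinate: the original column can be recovered from the
Householder vector. -/
theorem householder_vector_injective (n : ℕ) [NeZero n]
    (a b : EuclideanSpace ℝ (Fin n)) (ha : a 0 ≠ 0) (hb : b 0 ≠ 0)
    (h : a + Real.sign (a 0) • ‖a‖ • (EuclideanSpace.single 0 1 : EuclideanSpace ℝ (Fin n))
       = b + Real.sign (b 0) • ‖b‖ • (EuclideanSpace.single 0 1 : EuclideanSpace ℝ (Fin n))) :
    a = b := by
  have key : ∀ i : Fin n,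
      a i + Real.sign (a 0) * (‖a‖ * (if i = 0 then (1:ℝ) else 0))
      = b i + Real.sign (b 0) * (‖b‖ * (if i = 0 then (1:ℝ) else 0)) := by
    intro i
    have := congrFun (congrArg WithLp.ofLp h) i
    simpa [EuclideanSpace.single_apply] using this
  have hne : ∀ i : Fin n, i ≠ 0 → a i = b i := by
    intro i hi
    have := key i
    simpa [hi] using this
  have hA0 : a ≠ 0 := fun hc => ha (by simp [hc])
  have hB0 : b ≠ 0 := fun hc => hb (by simp [hc])
  have hApos : 0 < ‖a‖ := norm_pos_iff.mpr hA0
  have hBpos : 0 < ‖b‖ := norm_pos_iff.mpr hB0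
  have hsumA : ‖a‖ ^ 2 = ∑ i, a i ^ 2 := by
    rw [EuclideanSpace.norm_eq, Real.sq_sqrt (by positivity)]
    simp [sq_abs]
  have hsumB : ‖b‖ ^ 2 = ∑ i, b i ^ 2 := by
    rw [EuclideanSpace.norm_eq, Real.sq_sqrt (by positivity)]
    simp [sq_abs]
  have hrest : ∑ i ∈ Finset.univ.erase 0, a i ^ 2
      = ∑ i ∈ Finset.univ.erase 0, b i ^ 2 := by
    refine Finset.sum_congr rfl fun i hi => ?_
    rw [hne i (Finset.mem_erase.mp hi).1]
  have e2 : ‖a‖ ^ 2 - a 0 ^ 2 = ‖b‖ ^ 2 - b 0 ^ 2 := by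
    rw [hsumA, hsumB, ← Finset.add_sum_erase _ _ (Finset.mem_univ (0 : Fin n)),
      ← Finset.add_sum_erase _ _ (Finset.mem_univ (0 : Fin n)), hrest]
    ring
  have key0 : a 0 + Real.sign (a 0) * ‖a‖ = b 0 + Real.sign (b 0) * ‖b‖ := by
    simpa using key 0
  have hab : a 0 = b 0 := by
    rcases ha.lt_or_gt with hx | hx <;> rcases hb.lt_or_gt with hy | hy
    · rw [Real.sign_of_neg hx, Real.sign_of_neg hy] at key0
      have e1 : a 0 - ‖a‖ = b 0 - ‖b‖ := by linarith [key0]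
      have hfac : (a 0 - b 0) * (a 0 + b 0 - ‖a‖ - ‖b‖) = 0 := by
        linear_combination -(‖a‖ + ‖b‖) * e1 - e2
      have : a 0 + b 0 - ‖a‖ - ‖b‖ < 0 := by linarith
      have := mul_eq_zero.mp hfac
      rcases this with h' | h'
      · linarith
      · linarith
    · rw [Real.sign_of_neg hx, Real.sign_of_pos hy] at key0
      exfalso; nlinarith [key0]
    · rw [Real.sign_of_pos hx, Real.sign_of_neg hy] at key0
      exfalso; nlinarith [key0]
    · rw [Real.sign_of_pos hx, Real.sign_of_pos hy] at key0
      have e1 : a 0 + ‖a‖ = b 0 + ‖b‖ := by linarith [key0]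
      have hfac : (a 0 - b 0) * (a 0 + b 0 + ‖a‖ + ‖b‖) = 0 := by
        linear_combination (‖a‖ + ‖b‖) * e1 - e2
      have : 0 < a 0 + b 0 + ‖a‖ + ‖b‖ := by linarith
      rcases mul_eq_zero.mp hfac with h' | h'
      · linarith
      · linarith
  ext i
  rcases eq_or_ne i 0 with rfl | hi
  · exact hab
  · exact hne i hi
end
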